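/- arXiv:1204.6336 — 4 statements merged into one kernel-verified Lean document; each statement's English description precedes it below -/
import Mathlib

section
/- As x → ∞, the sum ψ(x) = Σ_{p ≤ x, p prime} (log p)/(p-1) is asymptotically equivalent to log x, i.e. ψ(x)/log x → 1. -/
/-!
Legendre's formula gives `(p - 1) v_p(n!) ≤ n` and `v_p(n!) ≥ n / p - 1`. Weighting by `log p`
and summing over `p ≤ n` yields `log n! ≤ n ψ(n)` and `n ∑ log p / p ≤ log n! + θ(n)`.
Since `n log n - n ≤ log n! ≤ n log n`, `θ(n) ≤ n log 4`, and `ψ(n) - ∑ log p / p` is bounded by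
the convergent series `∑ log k / (k (k - 1))`, we get `ψ(n) = log n + O(1)`.
-/

open Finset Real Filter Asymptotics
open scoped Nat

theorem Nat.cast_factorization_factorial_le_div {p : ℕ} (hp : p.Prime) (n : ℕ) :
    ((n !).factorization p : ℝ) ≤ n / (p - 1) := by
  have hp1 : (1 : ℝ) < p := mod_cast hp.one_lt
  have h : ((p - 1 : ℕ) : ℝ) * (n !).factorization p ≤ n := mod_cast
    (Nat.sub_one_mul_factorization_factorial hp).trans_le (Nat.sub_le _ _)
  rw [le_div_iff₀ (by linarith), mul_comm]
  simpa [Nat.cast_sub hp.one_le] using h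

theorem Nat.div_sub_one_le_cast_factorization_factorial {p : ℕ} (hp : p.Prime) (n : ℕ) :
    (n : ℝ) / p - 1 ≤ (n !).factorization p := by
  have h : n / p ≤ (n !).factorization p := by
    rw [Nat.factorization_factorial hp (Nat.lt_add_of_pos_right two_pos)]
    simpa using Finset.single_le_sum (f := fun i => n / p ^ i) (fun _ _ => Nat.zero_le _)
      (by simp : 1 ∈ Ico 1 (Nat.log p n + 2))
  calc (n : ℝ) / p - 1 ≤ ⌊(n : ℝ) / p⌋₊ := (Nat.sub_one_lt_floor _).le
    _ = (n / p : ℕ) := by rw [Nat.floor_div_natCast, Nat.floor_natCast]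
    _ ≤ _ := mod_cast h

theorem Real.log_factorial_eq_sum_primesLE (n : ℕ) :
    log (n ! : ℝ) = ∑ p ∈ n.primesLE, (n !).factorization p * log p := by
  rw [log_nat_eq_sum_factorization]
  refine Finsupp.sum_of_support_subset _ (fun p hp => ?_) _ (by simp)
  rw [Nat.support_factorization, Nat.mem_primeFactors] at hp
  exact Nat.mem_primesLE.mpr ⟨hp.1.dvd_factorial.mp hp.2.1, hp.1⟩

theorem log_factorial_le_mul_sum_log_div_sub_one (n : ℕ) :
    log (n ! : ℝ) ≤ n * ∑ p ∈ n.primesLE, log p / (p - 1) := by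
  rw [log_factorial_eq_sum_primesLE, mul_sum]
  refine sum_le_sum fun p hp => ?_
  have hp := Nat.prime_of_mem_primesLE hp
  calc ((n !).factorization p : ℝ) * log p ≤ n / (p - 1) * log p :=
        mul_le_mul_of_nonneg_right (Nat.cast_factorization_factorial_le_div hp n)
          (log_natCast_nonneg p)
    _ = n * (log p / (p - 1)) := by ring

theorem mul_sum_log_div_le_log_factorial_add_theta (n : ℕ) :
    n * ∑ p ∈ n.primesLE, log p / p ≤ log (n ! : ℝ) + Chebyshev.theta n := by
  rw [log_factorial_eq_sum_primesLE, Chebyshev.theta_eq_sum_primesLE_log, mul_sum,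
    ← sum_add_distrib]
  refine sum_le_sum fun p hp => ?_
  have hp := Nat.prime_of_mem_primesLE hp
  have hp0 : (p : ℝ) ≠ 0 := mod_cast hp.ne_zero
  calc n * (log p / p) = ((n : ℝ) / p - 1) * log p + log p := by field_simp; ring
    _ ≤ (n !).factorization p * log p + log p := by
      gcongr
      exact Nat.div_sub_one_le_cast_factorization_factorial hp n

theorem log_div_mul_sub_one_nonneg (k : ℕ) : 0 ≤ log k / (k * (k - 1)) := by
  rcases lt_or_ge k 2 with hk | hk
  · interval_cases k <;> simp
  have hk2 : (2 : ℝ) ≤ k := mod_cast hk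
  exact div_nonneg (log_natCast_nonneg k) (by nlinarith)

theorem log_div_mul_sub_one_le (k : ℕ) :
    log k / (k * (k - 1)) ≤ 4 * (k : ℝ) ^ (-(3 / 2) : ℝ) := by
  rcases lt_or_ge k 2 with hk | hk
  · interval_cases k <;> simp
  have hk2 : (2 : ℝ) ≤ k := mod_cast hk
  have hlog : log k ≤ 2 * (k : ℝ) ^ (1 / 2 : ℝ) := by
    simpa [div_eq_mul_inv, mul_comm] using log_le_rpow_div (x := k) (by positivity) one_half_pos
  have hrpow : (k : ℝ) ^ (1 / 2 : ℝ) = (k : ℝ) ^ 2 * (k : ℝ) ^ (-(3 / 2) : ℝ) := by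
    rw [← rpow_natCast, ← rpow_add (by positivity)]; norm_num
  rw [hrpow] at hlog
  rw [div_le_iff₀ (by nlinarith)]
  have hr : 0 ≤ (k : ℝ) ^ (-(3 / 2) : ℝ) := by positivity
  nlinarith [mul_nonneg hr (mul_nonneg (by linarith : (0:ℝ) ≤ k) (by linarith : (0:ℝ) ≤ k - 2))]

theorem summable_log_div_mul_sub_one :
    Summable fun k : ℕ => log k / (k * (k - 1)) :=
  .of_nonneg_of_le log_div_mul_sub_one_nonneg log_div_mul_sub_one_le
    ((Real.summable_nat_rpow.mpr (by norm_num)).mul_left 4)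

theorem log_sub_one_le_sum_log_div_sub_one {n : ℕ} (hn : n ≠ 0) :
    log n - 1 ≤ ∑ p ∈ n.primesLE, log p / (p - 1) := by
  have hn0 : (0 : ℝ) < n := by positivity
  have hstirling := Stirling.le_log_factorial_stirling hn
  have : 0 ≤ log n := log_natCast_nonneg n
  have : 0 ≤ log (2 * π) := log_nonneg (by linarith [pi_gt_three])
  refine le_of_mul_le_mul_left ?_ hn0
  nlinarith [log_factorial_le_mul_sum_log_div_sub_one n]

theorem sum_log_div_sub_one_le {n : ℕ} (hn : n ≠ 0) :
    ∑ p ∈ n.primesLE, log p / (p - 1) ≤ log n + log 4 + ∑' k : ℕ, log k / (k * (k - 1)) := by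
  have hn0 : (0 : ℝ) < n := by positivity
  have hsplit : ∑ p ∈ n.primesLE, log p / (p - 1) =
      ∑ p ∈ n.primesLE, log p / p + ∑ p ∈ n.primesLE, log p / (p * (p - 1)) := by
    rw [← sum_add_distrib]
    refine sum_congr rfl fun p hp => ?_
    have : (1 : ℝ) < p := mod_cast Nat.one_lt_of_mem_primesLE hp
    have : (p : ℝ) - 1 ≠ 0 := by linarith
    field_simp
    ring
  have hmain : ∑ p ∈ n.primesLE, log p / p ≤ log n + log 4 := by
    have hfact : log (n ! : ℝ) ≤ n * log n := by
      simpa [log_pow] using log_le_log (by positivity)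
        (mod_cast Nat.factorial_le_pow n : (n ! : ℝ) ≤ (n : ℝ) ^ n)
    have htheta := Chebyshev.theta_le_log4_mul_x (Nat.cast_nonneg n)
    refine le_of_mul_le_mul_left ?_ hn0
    nlinarith [mul_sum_log_div_le_log_factorial_add_theta n]
  have htail : ∑ p ∈ n.primesLE, log p / (p * (p - 1)) ≤ ∑' k : ℕ, log k / (k * (k - 1)) :=
    summable_log_div_mul_sub_one.sum_le_tsum _ fun k _ => log_div_mul_sub_one_nonneg k
  linarith

theorem log_le_log_natFloor_add_log_two {x : ℝ} (hx : 1 ≤ x) : log x ≤ log ⌊x⌋₊ + log 2 := by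
  have hn : (1 : ℝ) ≤ ⌊x⌋₊ := mod_cast Nat.one_le_floor_iff x |>.mpr hx
  rw [← log_mul (by positivity) two_ne_zero]
  exact log_le_log (by linarith) (by linarith [Nat.lt_floor_add_one x])

theorem isBigO_sum_log_div_sub_one_sub_log :
    (fun x : ℝ => ∑ p ∈ ⌊x⌋₊.primesLE, log p / (p - 1) - log x) =O[atTop] fun _ => (1 : ℝ) := by
  refine .of_bound (1 + log 4 + ∑' k : ℕ, log k / (k * (k - 1))) ?_
  filter_upwards [eventually_ge_atTop 1] with x hx
  have hn : ⌊x⌋₊ ≠ 0 := (Nat.floor_pos.mpr hx).ne'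
  have hfloor : log ⌊x⌋₊ ≤ log x := log_le_log (by positivity) (Nat.floor_le (by linarith))
  have hlog2 : log 2 ≤ log 4 := log_le_log two_pos (by norm_num)
  have hK : 0 ≤ ∑' k : ℕ, log k / (k * (k - 1)) := tsum_nonneg log_div_mul_sub_one_nonneg
  rw [norm_one, mul_one, Real.norm_eq_abs, abs_le]
  constructor <;>
  linarith [log_sub_one_le_sum_log_div_sub_one hn, sum_log_div_sub_one_le hn,
    log_le_log_natFloor_add_log_two hx, hK]

/-- As `x → ∞`, `ψ(x) = Σ_{p ≤ x, p prime} (log p)/(p-1)` is asymptotically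
equivalent to `log x`. -/
theorem stmt3 :
    Filter.Tendsto
      (fun x : ℝ =>
        (∑ p ∈ (Finset.range (⌊x⌋₊ + 1)).filter Nat.Prime, Real.log p / ((p : ℝ) - 1))
          / Real.log x)
      Filter.atTop (nhds 1) := by
  -- `Nat.primesLE n` is by definition `{p ∈ range (n + 1) | p.Prime}`.
  have hequiv : (fun x : ℝ => ∑ p ∈ ⌊x⌋₊.primesLE, log p / (p - 1)) ~[atTop] log :=
    isBigO_sum_log_div_sub_one_sub_log.trans_isLittleO isLittleO_const_log_atTop
  exact (isEquivalent_iff_tendsto_one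
    ((eventually_gt_atTop 1).mono fun x hx => (log_pos hx).ne')).mp hequiv
end

section
/- Let X be a set of prime numbers. Define its natural density d(X) = liminf_{N→∞} (1/π(N)) · #{p ∈ X : p ≤ N}, where π(N) is the number of primes ≤ N, and its weighted density δ(X) = liminf_{x→∞} (1/ψ(x)) Σ_{p∈X, p≤x} (log p)/(p-1), where ψ(x) = Σ_{p≤x} (log p)/(p-1). Then δ(X) ≥ d(X). -/
/-!
If `β π(N) ≤ #{p ∈ X : p ≤ N}` for all large `N`, Abel summation against the weight
`w n = log n / (n - 1)`, which is decreasing from `n = 2` on, gives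
`∑_{p ∈ X, p ≤ N} w p ≥ β ψ(N) - O(1)`. Since `w p ≥ 1 / p`, `ψ(N)` dominates the divergent sum
of prime reciprocals, so the weighted ratio has `liminf ≥ β`.
-/

open Filter Finset

section AbelSummation

variable {a b c w : ℕ → ℝ} {n₀ : ℕ}

theorem le_sum_range_mul_of_antitone_of_sum_range_nonneg (hw : ∀ n ≥ n₀, w (n + 1) ≤ w n)
    (hw₀ : ∀ n ≥ n₀, 0 ≤ w n) (hc : ∀ n ≥ n₀, 0 ≤ ∑ k ∈ range n, c k) {N : ℕ} (hN : n₀ ≤ N) :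
    ∑ k ∈ range n₀, c k * w k - (∑ k ∈ range n₀, c k) * w n₀ ≤ ∑ k ∈ range N, c k * w k := by
  -- Abel summation: with `C n = ∑_{k<n} c k`, `∑_{k<n} c k w k - C n w n` grows by
  -- `C (n+1) (w n - w (n+1)) ≥ 0` at each step.
  have hmono : ∀ n ≥ n₀, ∑ k ∈ range n₀, c k * w k - (∑ k ∈ range n₀, c k) * w n₀ ≤
      ∑ k ∈ range n, c k * w k - (∑ k ∈ range n, c k) * w n := by
    intro n hn
    induction n, hn using Nat.le_induction with
    | base => exact le_rfl
    | succ n hn ih =>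
      have hstep := mul_nonneg (hc (n + 1) (by omega)) (sub_nonneg.2 (hw n hn))
      simp only [sum_range_succ] at hstep ⊢
      linarith
  nlinarith [hmono N hN, mul_nonneg (hc N hN) (hw₀ N hN)]

theorem le_liminf_weighted_div_of_eventually_mul_le (hab : ∀ n, a n ≤ b n) (hw₀ : ∀ n, 0 ≤ w n)
    (hw : ∀ n ≥ n₀, w (n + 1) ≤ w n)
    (hT : Tendsto (fun N => ∑ k ∈ range N, b k * w k) atTop atTop) {β : ℝ}
    (hβ : ∀ᶠ N in atTop, β * ∑ k ∈ range N, b k ≤ ∑ k ∈ range N, a k) :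
    β ≤ liminf (fun N => (∑ k ∈ range N, a k * w k) / ∑ k ∈ range N, b k * w k) atTop := by
  obtain ⟨n₁, hn₁⟩ := eventually_atTop.1 hβ
  set m := max n₀ n₁
  set D := ∑ k ∈ range m, (a k - β * b k) * w k - (∑ k ∈ range m, (a k - β * b k)) * w m
  have habel : ∀ N ≥ m, D ≤ ∑ k ∈ range N, (a k - β * b k) * w k :=
    fun N hN => le_sum_range_mul_of_antitone_of_sum_range_nonneg
      (fun n hn => hw n (le_of_max_le_left hn)) (fun n _ => hw₀ n)
      (fun n hn => by
        rw [sum_sub_distrib, ← mul_sum]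
        exact sub_nonneg.2 (hn₁ n (le_of_max_le_right hn))) hN
  have hlower : ∀ᶠ N in atTop, β + D / ∑ k ∈ range N, b k * w k ≤
      (∑ k ∈ range N, a k * w k) / ∑ k ∈ range N, b k * w k := by
    filter_upwards [eventually_ge_atTop m, hT.eventually_gt_atTop 0] with N hN hT₀
    have := habel N hN
    simp only [sub_mul, sum_sub_distrib, mul_assoc, ← mul_sum] at this
    rw [add_div' _ _ _ hT₀.ne', div_le_div_iff_of_pos_right hT₀]
    linarith
  have hlim : Tendsto (fun N => β + D / ∑ k ∈ range N, b k * w k) atTop (nhds β) := by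
    simpa using tendsto_const_nhds.add (tendsto_const_nhds.div_atTop hT)
  have hle_one : ∀ᶠ N in atTop, (∑ k ∈ range N, a k * w k) / ∑ k ∈ range N, b k * w k ≤ 1 := by
    filter_upwards [hT.eventually_gt_atTop 0] with N hT₀
    exact div_le_one_of_le₀ (sum_le_sum fun k _ => mul_le_mul_of_nonneg_right (hab k) (hw₀ k))
      hT₀.le
  rw [← hlim.liminf_eq]
  exact liminf_le_liminf hlower hlim.isBoundedUnder_ge
    (isBoundedUnder_of_eventually_le hle_one).isCoboundedUnder_ge

theorem liminf_div_le_liminf_weighted_div (ha : ∀ n, 0 ≤ a n) (hab : ∀ n, a n ≤ b n)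
    (hw₀ : ∀ n, 0 ≤ w n) (hw : ∀ n ≥ n₀, w (n + 1) ≤ w n)
    (hT : Tendsto (fun N => ∑ k ∈ range N, b k * w k) atTop atTop) :
    liminf (fun N => (∑ k ∈ range N, a k) / ∑ k ∈ range N, b k) atTop ≤
      liminf (fun N => (∑ k ∈ range N, a k * w k) / ∑ k ∈ range N, b k * w k) atTop := by
  have hA : ∀ N, 0 ≤ ∑ k ∈ range N, a k := fun N => sum_nonneg fun k _ => ha k
  have hB : ∀ N, 0 ≤ ∑ k ∈ range N, b k := fun N => sum_nonneg fun k _ => (ha k).trans (hab k)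
  refine le_of_forall_lt_imp_le_of_dense fun β hβ =>
    le_liminf_weighted_div_of_eventually_mul_le hab hw₀ hw hT ?_
  have hbdd : IsBoundedUnder (· ≥ ·) atTop fun N => (∑ k ∈ range N, a k) / ∑ k ∈ range N, b k :=
    isBoundedUnder_of ⟨0, fun N => div_nonneg (hA N) (hB N)⟩
  filter_upwards [eventually_lt_of_lt_liminf hβ hbdd] with N hN
  rcases (hB N).eq_or_lt with hB₀ | hB₀
  · rw [← hB₀, mul_zero]
    exact hA N
  · exact ((lt_div_iff₀ hB₀).1 hN).le

theorem liminf_card_filter_div_le_liminf_sum_filter_div {q r : ℕ → Prop} [DecidablePred q]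
    [DecidablePred r] (hqr : ∀ n, q n → r n) (hw₀ : ∀ n, 0 ≤ w n) (hw : ∀ n ≥ n₀, w (n + 1) ≤ w n)
    (hT : Tendsto (fun N => ∑ k ∈ range N with r k, w k) atTop atTop) :
    liminf (fun N => (#{k ∈ range (N + 1) | q k} : ℝ) / #{k ∈ range (N + 1) | r k}) atTop ≤
      liminf (fun N => (∑ k ∈ range (N + 1) with q k, w k) / ∑ k ∈ range (N + 1) with r k, w k)
        atTop := by
  have key := liminf_div_le_liminf_weighted_div (a := fun k => if q k then 1 else 0)
    (b := fun k => if r k then 1 else 0) (fun n => by split_ifs <;> norm_num)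
    (fun n => by split_ifs <;> simp_all) hw₀ hw
    (by simpa only [boole_mul, ← sum_filter] using hT)
  simp only [boole_mul, ← sum_filter, ← cast_card] at key
  rwa [← liminf_nat_add _ 1, ← liminf_nat_add
    (fun N => (∑ k ∈ range N with q k, w k) / ∑ k ∈ range N with r k, w k) 1] at key

end AbelSummation

open Real

theorem log_div_sub_one_nonneg {x : ℝ} (hx : 0 ≤ x) : 0 ≤ log x / (x - 1) := by
  rcases le_total x 1 with h | h
  · exact div_nonneg_of_nonpos (log_nonpos hx h) (by linarith)
  · exact div_nonneg (log_nonneg h) (by linarith)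

theorem log_add_one_div_le_log_div_sub_one {x : ℝ} (hx : 2 ≤ x) :
    log (x + 1) / x ≤ log x / (x - 1) := by
  have hlog_succ : log (x + 1) - log x ≤ 1 / x := by
    have := log_le_sub_one_of_pos (show 0 < (x + 1) / x by positivity)
    rwa [log_div (by linarith) (by linarith), add_div, div_self (by linarith),
      add_sub_cancel_left] at this
  have hone_le : 1 ≤ log (x + 1) := by
    rw [le_log_iff_exp_le (by linarith)]
    linarith [exp_one_lt_d9]
  rw [div_le_div_iff₀ (by linarith) (by linarith)]
  have := mul_le_mul_of_nonneg_left hlog_succ (show 0 ≤ x by linarith)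
  rw [mul_one_div_cancel (by linarith)] at this
  nlinarith

theorem inv_le_log_div_sub_one {x : ℝ} (hx : 1 < x) : x⁻¹ ≤ log x / (x - 1) := by
  rw [le_div_iff₀ (by linarith)]
  calc x⁻¹ * (x - 1) = 1 - x⁻¹ := by field_simp
    _ ≤ log x := one_sub_inv_le_log_of_pos (by linarith)

theorem tendsto_sum_primes_log_div_sub_one_atTop :
    Tendsto (fun N => ∑ p ∈ range N with p.Prime, log p / ((p : ℝ) - 1)) atTop atTop := by
  have hrecip := (not_summable_iff_tendsto_nat_atTop_of_nonneg
    fun n => Set.indicator_nonneg (fun p _ => by positivity) n).1 not_summable_one_div_on_primes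
  refine tendsto_atTop_mono (fun N => ?_) hrecip
  rw [sum_indicator_eq_sum_filter]
  exact sum_le_sum fun p hp => by
    simpa using inv_le_log_div_sub_one (by exact_mod_cast (mem_filter.1 hp).2.one_lt)

theorem stmt4_general (X : Set ℕ) [DecidablePred (· ∈ X)] :
    liminf
        (fun N : ℕ =>
          (((Finset.range (N + 1)).filter fun p => p.Prime ∧ p ∈ X).card : ℝ)
            / (Nat.primeCounting N : ℝ))
        atTop
      ≤
    liminf
        (fun N : ℕ =>
          (∑ p ∈ (Finset.range (N + 1)).filter (fun p => p.Prime ∧ p ∈ X),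
              Real.log p / ((p : ℝ) - 1))
            /
          (∑ p ∈ (Finset.range (N + 1)).filter Nat.Prime,
              Real.log p / ((p : ℝ) - 1)))
        atTop := by
  simp only [← Nat.primesBelow_card_eq_primeCounting', Nat.primeCounting, Nat.primesBelow]
  refine liminf_card_filter_div_le_liminf_sum_filter_div (fun p hp => hp.1)
    (fun n => log_div_sub_one_nonneg n.cast_nonneg) (n₀ := 2) (fun n hn => ?_)
    tendsto_sum_primes_log_div_sub_one_atTop
  have := log_add_one_div_le_log_div_sub_one (x := n) (by exact_mod_cast hn)
  push_cast
  rwa [add_sub_cancel_right]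

/-- For a set `X` of primes, the weighted density
`δ(X) = liminf (1/ψ(N)) Σ_{p ∈ X, p ≤ N} (log p)/(p-1)` is at least the natural density
`d(X) = liminf #{p ∈ X : p ≤ N}/π(N)`. -/
theorem stmt4 (X : Set ℕ) [DecidablePred (· ∈ X)] (hX : ∀ p ∈ X, p.Prime) :
    liminf
        (fun N : ℕ =>
          (((Finset.range (N + 1)).filter fun p => p.Prime ∧ p ∈ X).card : ℝ)
            / (Nat.primeCounting N : ℝ))
        atTop
      ≤
    liminf
        (fun N : ℕ =>
          (∑ p ∈ (Finset.range (N + 1)).filter (fun p => p.Prime ∧ p ∈ X),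
              Real.log p / ((p : ℝ) - 1))
            /
          (∑ p ∈ (Finset.range (N + 1)).filter Nat.Prime,
              Real.log p / ((p : ℝ) - 1)))
        atTop :=
  stmt4_general X
end

section
/- Let m ≥ 1 and let β_1,…,β_m be positive rational numbers with Σ_j β_j = 1. Then there exists a function ω : ℕ → ℕ^m with ω(0) = (0,…,0), such that for every k ≥ 1 there is exactly one index a_k ∈ {1,…,m} with ω_{a_k}(k) = ω_{a_k}(k-1) + 1 and ω_i(k) = ω_i(k-1) for all i ≠ a_k, and moreover for each i the sequence k ↦ ω_i(k) - β_i·k is bounded. -/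
/-!
Write `β i = c i / N` over a common denominator `N`, so that `∑ i, c i = N`. Repeat a block of
`N` steps in which counter `i` is served exactly `c i` times, and let `ω k i` count the steps
before `k` that serve `i`; exactly one counter moves at each step by construction. After
`q = k / N` full blocks and a partial one, both `ω k i` and `β i * k = c i * k / N` lie in
`[q * c i, (q + 1) * c i]`, so they differ by at most `c i`.
-/
open Finset Function

def hitCount {ι : Type*} [DecidableEq ι] (s : ℕ → ι) (k : ℕ) (i : ι) : ℕ :=
  #{t ∈ range k | s t = i}

section hitCount

variable {ι : Type*} [DecidableEq ι] (s : ℕ → ι)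

@[simp]
lemma hitCount_zero (i : ι) : hitCount s 0 i = 0 := by
  simp [hitCount]

lemma hitCount_succ (k : ℕ) (i : ι) :
    hitCount s (k + 1) i = hitCount s k i + if s k = i then 1 else 0 := by
  simp only [hitCount, card_filter, sum_range_succ]

lemma existsUnique_hitCount_succ (k : ℕ) :
    ∃! a : ι, hitCount s (k + 1) a = hitCount s k a + 1 ∧
      ∀ i, i ≠ a → hitCount s (k + 1) i = hitCount s k i := by
  refine ⟨s k, ⟨by simp [hitCount_succ], fun i hi => by simp [hitCount_succ, Ne.symm hi]⟩, ?_⟩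
  rintro a ⟨ha, -⟩
  by_contra hne
  simp [hitCount_succ, Ne.symm hne] at ha

lemma hitCount_mono (i : ι) : Monotone (hitCount s · i) := fun _ _ h =>
  card_le_card (filter_subset_filter _ (range_subset_range.mpr h))

variable {s} {N : ℕ}

lemma Function.Periodic.hitCount_add (hs : Periodic s N) (k : ℕ) (i : ι) :
    hitCount s (N + k) i = hitCount s N i + hitCount s k i := by
  simp only [hitCount, card_filter, sum_range_add]
  congr 1
  exact sum_congr rfl fun t _ => by rw [add_comm N, hs]

lemma Function.Periodic.hitCount_eq (hs : Periodic s N) (k : ℕ) (i : ι) :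
    hitCount s k i = k / N * hitCount s N i + hitCount s (k % N) i := by
  conv_lhs => rw [← Nat.div_add_mod k N]
  induction k / N with
  | zero => simp
  | succ q ih => rw [Nat.mul_succ, add_comm _ N, add_assoc, hs.hitCount_add, ih]; ring

lemma Function.Periodic.abs_hitCount_sub_le (hs : Periodic s N) (hN : 0 < N) (k : ℕ) (i : ι) :
    |(hitCount s k i : ℝ) - hitCount s N i / N * k| ≤ hitCount s N i := by
  have hr : hitCount s (k % N) i ≤ hitCount s N i := hitCount_mono s i (Nat.mod_lt k hN).le
  have hk : (k : ℝ) = N * (k / N : ℕ) + (k % N : ℕ) := by exact_mod_cast (Nat.div_add_mod k N).symm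
  have hfrac : (hitCount s N i : ℝ) * (k % N : ℕ) / N ≤ hitCount s N i := by
    rw [div_le_iff₀ (by exact_mod_cast hN)]
    exact mul_le_mul_of_nonneg_left (by exact_mod_cast (Nat.mod_lt k hN).le) (by positivity)
  have hNR : (N : ℝ) ≠ 0 := by exact_mod_cast hN.ne'
  have hsplit : (hitCount s N i : ℝ) / N * (N * (k / N : ℕ) + (k % N : ℕ)) =
      (k / N : ℕ) * hitCount s N i + hitCount s N i * (k % N : ℕ) / N := by
    field_simp
  rw [hs.hitCount_eq k i, hk, hsplit, abs_le]
  push_cast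
  have : (0 : ℝ) ≤ hitCount s N i * (k % N : ℕ) / N := by positivity
  constructor <;> linarith [(Nat.cast_le (α := ℝ)).mpr hr]

end hitCount

lemma exists_periodic_hitCount_eq {m : ℕ} (c : Fin m → ℕ) (hN : 0 < ∑ i, c i) :
    ∃ s : ℕ → Fin m, Periodic s (∑ i, c i) ∧ ∀ i, hitCount s (∑ i, c i) i = c i := by
  -- `finSigmaFinEquiv` lays out runs of lengths `c 0, c 1, …` end to end in one period.
  refine ⟨fun t => (finSigmaFinEquiv.symm ⟨t % _, Nat.mod_lt t hN⟩).1, fun t => by simp, fun i => ?_⟩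
  rw [hitCount, card_filter, sum_range]
  simp only [Nat.mod_eq_of_lt (Fin.isLt _), Fin.eta]
  rw [← finSigmaFinEquiv.sum_comp]
  simp only [Equiv.symm_apply_apply]
  rw [Fintype.sum_sigma]
  simp [apply_ite]

lemma exists_common_denominator {ι : Type*} [Fintype ι] (β : ι → ℚ) (hβ : ∀ i, 0 ≤ β i) :
    ∃ N : ℕ, 0 < N ∧ ∃ c : ι → ℕ, ∀ i, (c i : ℚ) = β i * N := by
  refine ⟨∏ i, (β i).den, prod_pos fun i _ => (β i).pos,
    fun i => (β i).num.toNat * ((∏ j, (β j).den) / (β i).den), fun i => ?_⟩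
  obtain ⟨d, hd⟩ : (β i).den ∣ ∏ j, (β j).den := dvd_prod_of_mem _ (mem_univ i)
  simp only [hd, Nat.mul_div_cancel_left _ (β i).pos]
  have hnum : ((β i).num.toNat : ℚ) = (β i).num := by
    exact_mod_cast Int.toNat_of_nonneg (Rat.num_nonneg.mpr (hβ i))
  push_cast
  rw [hnum, ← Rat.mul_den_eq_num]
  ring

theorem stmt5_general {m : ℕ} (β : Fin m → ℚ) (hβpos : ∀ i, 0 < β i)
    (hβsum : ∑ i, β i = 1) :
    ∃ ω : ℕ → Fin m → ℕ,
      (∀ i, ω 0 i = 0) ∧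
      (∀ k : ℕ, ∃! a : Fin m,
        ω (k + 1) a = ω k a + 1 ∧ ∀ i, i ≠ a → ω (k + 1) i = ω k i) ∧
      (∀ i, ∃ C : ℝ, ∀ k : ℕ, |(ω k i : ℝ) - (β i : ℝ) * k| ≤ C) := by
  obtain ⟨N, hN, c, hc⟩ := exists_common_denominator β fun i => (hβpos i).le
  have hcsum : ∑ i, c i = N := by
    exact_mod_cast (show ((∑ i, c i : ℕ) : ℚ) = N by push_cast [hc, ← sum_mul, hβsum]; ring)
  obtain ⟨s, hs, hsc⟩ := exists_periodic_hitCount_eq c (hcsum ▸ hN)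
  rw [hcsum] at hs hsc
  refine ⟨hitCount s, hitCount_zero s, existsUnique_hitCount_succ s, fun i => ⟨c i, fun k => ?_⟩⟩
  have hβ : (β i : ℝ) = c i / N := by
    rw [eq_div_iff (by exact_mod_cast hN.ne')]
    exact_mod_cast (hc i).symm
  simpa only [hsc, hβ] using hs.abs_hitCount_sub_le hN k i

/-- Given positive rationals `β_1,…,β_m` summing to 1, there is a scheduling
`ω : ℕ → ℕ^m` with `ω 0 = 0`, at each step exactly one coordinate increasing by one,
and each coordinate satisfying `ω_i(k) = β_i k + O(1)`. -/
theorem stmt5 {m : ℕ} (hm : 1 ≤ m) (β : Fin m → ℚ) (hβpos : ∀ i, 0 < β i)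
    (hβsum : ∑ i, β i = 1) :
    ∃ ω : ℕ → Fin m → ℕ,
      (∀ i, ω 0 i = 0) ∧
      (∀ k : ℕ, ∃! a : Fin m,
        ω (k + 1) a = ω k a + 1 ∧ ∀ i, i ≠ a → ω (k + 1) i = ω k i) ∧
      (∀ i, ∃ C : ℝ, ∀ k : ℕ, |(ω k i : ℝ) - (β i : ℝ) * k| ≤ C) :=
  stmt5_general β hβpos hβsum
end

section
/- Let A be a commutative ring of prime characteristic p and let D be a derivation of A. Then the p-th iterate D^p is again a derivation of A. -/
open Finset

lemma iter_leibniz {A : Type*} [CommRing A] (D : Derivation ℤ A A) (n : ℕ) (a b : A) :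
    (⇑D)^[n] (a * b) = ∑ k ∈ Finset.range (n + 1),
      n.choose k • ((⇑D)^[k] a * (⇑D)^[n - k] b) := by
  induction n with
  | zero => simp
  | succ n ih =>
    rw [Function.iterate_succ_apply', ih, map_sum]
    have hterm : ∀ k ∈ Finset.range (n + 1),
        D (n.choose k • ((⇑D)^[k] a * (⇑D)^[n - k] b)) =
          n.choose k • ((⇑D)^[k] a * (⇑D)^[(n - k) + 1] b)
          + n.choose k • ((⇑D)^[k + 1] a * (⇑D)^[n - k] b) := by
      intro k hk
      rw [map_nsmul, Derivation.leibniz, smul_eq_mul, smul_eq_mul, smul_add,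
        ← Function.iterate_succ_apply' D, ← Function.iterate_succ_apply' D,
        mul_comm ((⇑D)^[n - k] b)]
    rw [Finset.sum_congr rfl hterm, Finset.sum_add_distrib]
    set g : ℕ → A := fun k => (⇑D)^[k] a * (⇑D)^[n + 1 - k] b with hg
    have hA : ∑ k ∈ Finset.range (n + 1), n.choose k • ((⇑D)^[k + 1] a * (⇑D)^[n - k] b)
        = ∑ k ∈ Finset.range (n + 1), n.choose k • g (k + 1) := by
      apply Finset.sum_congr rfl
      intro k _
      simp [hg, Nat.succ_sub_succ]
    have hB : ∑ k ∈ Finset.range (n + 1), n.choose k • ((⇑D)^[k] a * (⇑D)^[(n - k) + 1] b)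
        = ∑ k ∈ Finset.range (n + 1), n.choose (k + 1) • g (k + 1) + n.choose 0 • g 0 := by
      rw [← Finset.sum_range_succ' (fun k => n.choose k • g k) (n + 1)]
      conv_rhs => rw [Finset.sum_range_succ]
      rw [Nat.choose_succ_self, zero_smul, add_zero]
      apply Finset.sum_congr rfl
      intro k hk
      rw [Finset.mem_range] at hk
      have hk' : k ≤ n := Nat.lt_succ_iff.mp hk
      rw [hg]
      simp only []
      rw [Nat.succ_sub hk']
    rw [hA, hB]
    conv_rhs => rw [Finset.sum_range_succ' (fun k => (n + 1).choose k • g k) (n + 1)]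
    simp only [Nat.choose_succ_succ', add_smul, Finset.sum_add_distrib,
      Nat.choose_zero_right, one_smul]
    abel

lemma iter_zero {A : Type*} [CommRing A] (D : Derivation ℤ A A) (n : ℕ) :
    (⇑D)^[n] 0 = 0 :=
  Function.iterate_fixed (map_zero D) n

/-- If `A` is a commutative ring of prime characteristic `p` and `D` a derivation of `A`,
then the `p`-th iterate `D^p` is again a derivation of `A`. -/
theorem stmt6 {p : ℕ} (hp : p.Prime) {A : Type*} [CommRing A] [CharP A p]
    (D : Derivation ℤ A A) :
    ∃ E : Derivation ℤ A A, ⇑E = (⇑D)^[p] := by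
  have hppos := hp.pos
  have hpow : ∀ x : A, ((D.toLinearMap ^ p) : A →ₗ[ℤ] A) x = (⇑D)^[p] x := by
    intro x
    rw [Module.End.pow_apply]
    rfl
  refine ⟨⟨D.toLinearMap ^ p, ?_, ?_⟩, ?_⟩
  · rw [hpow]
    obtain ⟨m, rfl⟩ : ∃ m, p = m + 1 := ⟨p - 1, by omega⟩
    rw [Function.iterate_succ_apply, Derivation.map_one_eq_zero, iter_zero]
  · intro a b
    simp only [hpow, smul_eq_mul]
    rw [iter_leibniz D p a b, Finset.sum_range_succ]
    have hrange : ∑ x ∈ Finset.range p, p.choose x • ((⇑D)^[x] a * (⇑D)^[p - x] b)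
        = ∑ k ∈ Finset.range (p - 1), p.choose (k + 1) • ((⇑D)^[k + 1] a * (⇑D)^[p - (k + 1)] b)
          + p.choose 0 • ((⇑D)^[0] a * (⇑D)^[p - 0] b) := by
      rw [show Finset.range p = Finset.range ((p - 1) + 1) by congr 1; omega,
        Finset.sum_range_succ']
    have hmid : ∀ k ∈ Finset.range (p - 1),
        p.choose (k + 1) • ((⇑D)^[k + 1] a * (⇑D)^[p - (k + 1)] b) = 0 := by
      intro k hk
      rw [Finset.mem_range] at hk
      have hdvd : p ∣ p.choose (k + 1) := hp.dvd_choose_self (Nat.succ_pos k).ne' (by omega)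
      rw [nsmul_eq_mul, (CharP.cast_eq_zero_iff A p _).mpr hdvd, zero_mul]
    rw [hrange, Finset.sum_eq_zero hmid]
    simp [Nat.sub_self]
    ring
  · ext x
    exact hpow x
end
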